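/- Let γ = 1, s ≠ 0, μ, k > 0, A ≠ 0, B ∈ ℝ, and suppose f(P) = P − (As + B) + A²/P has two positive roots P⁺ < P⁻. Define F₁'(P) = f(P) − 2(sμ/k)²P for P > 0. Then F₁''(P) = f'(P) − 2(sμ/k)² < 0 for all 0 < P < P⁺, lim_{P→0⁺} F₁'(P) = +∞, F₁'(P⁺) = −2(sμ/k)²P⁺ < 0, and consequently F₁' has exactly one zero in the interval (0, P⁺). -/

import Mathlib

/-!
By Vieta, `P⁺ P⁻ = A²`, so `P² < A²` and hence `f'(P) = 1 - A²/P² < 0` on `(0, P⁺]`. Subtracting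
`2(sμ/k)² P` keeps `F₁'` strictly decreasing there and makes it negative at the root `P⁺`, while
`A²/P` sends it to `+∞` at `0⁺`; the intermediate value theorem gives the unique zero.
-/

open Set Filter Topology

theorem mul_eq_of_quadratic_roots {R : Type*} [CommRing R] [IsDomain R] {b c p q : R}
    (hpq : p ≠ q) (hp : p ^ 2 - b * p + c = 0) (hq : q ^ 2 - b * q + c = 0) : p * q = c := by
  have hsum : p + q = b := by
    have : (p - q) * (p + q - b) = 0 := by linear_combination hp - hq
    linear_combination (mul_eq_zero.mp this).resolve_left (sub_ne_zero.mpr hpq)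
  linear_combination -hp + p * hsum

theorem existsUnique_eq_zero_of_strictAntiOn_Ioc {g : ℝ → ℝ} {a b : ℝ} (hab : a < b)
    (hcont : ContinuousOn g (Ioc a b)) (hanti : StrictAntiOn g (Ioc a b))
    (hlim : Tendsto g (𝓝[>] a) atTop) (hb : g b < 0) :
    ∃! x, x ∈ Ioo a b ∧ g x = 0 := by
  obtain ⟨x₀, hgx₀, hx₀⟩ := ((hlim.eventually_gt_atTop 0).and (Ioo_mem_nhdsGT hab)).exists
  obtain ⟨z, hz, hgz⟩ := intermediate_value_Ioo' hx₀.2.le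
    (hcont.mono fun x hx => ⟨hx₀.1.trans_le hx.1, hx.2⟩) ⟨hb, hgx₀⟩
  have hzab : z ∈ Ioo a b := ⟨hx₀.1.trans hz.1, hz.2⟩
  refine ⟨z, ⟨hzab, hgz⟩, fun y ⟨hy, hgy⟩ => ?_⟩
  exact hanti.injOn (Ioo_subset_Ioc_self hy) (Ioo_subset_Ioc_self hzab) (hgy.trans hgz.symm)

/-- `a` stands for `A s + B`. -/
noncomputable def qhdNonlinearity (a A P : ℝ) : ℝ := P - a + A ^ 2 / P

namespace qhdNonlinearity

variable {a A : ℝ}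

theorem eq_zero_iff {P : ℝ} (hP : P ≠ 0) :
    qhdNonlinearity a A P = 0 ↔ P ^ 2 - a * P + A ^ 2 = 0 := by
  rw [qhdNonlinearity, ← mul_eq_zero_iff_right hP]
  field_simp

theorem mul_roots_eq {p q : ℝ} (hp0 : p ≠ 0) (hq0 : q ≠ 0) (hpq : p ≠ q)
    (hp : qhdNonlinearity a A p = 0) (hq : qhdNonlinearity a A q = 0) : p * q = A ^ 2 :=
  mul_eq_of_quadratic_roots hpq ((eq_zero_iff hp0).mp hp) ((eq_zero_iff hq0).mp hq)

theorem hasDerivAt {P : ℝ} (hP : P ≠ 0) :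
    HasDerivAt (qhdNonlinearity a A) (1 - A ^ 2 / P ^ 2) P := by
  have h := ((hasDerivAt_id' P).sub_const a).add ((hasDerivAt_inv hP).const_mul (A ^ 2))
  simp only [← div_eq_mul_inv] at h
  exact h.congr_deriv (by ring)

theorem deriv_neg_of_le_root {p q P : ℝ} (hP : 0 < P) (hPp : P ≤ p) (hpq : p < q)
    (hp : qhdNonlinearity a A p = 0) (hq : qhdNonlinearity a A q = 0) :
    deriv (qhdNonlinearity a A) P < 0 := by
  rw [(hasDerivAt hP.ne').deriv]
  have hprod := mul_roots_eq (hP.trans_le hPp).ne' (hP.trans (hPp.trans_lt hpq)).ne' hpq.ne hp hq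
  have : P ^ 2 < A ^ 2 := by rw [← hprod]; nlinarith
  linarith [(one_lt_div (by positivity)).mpr this]

theorem tendsto_nhdsGT_zero (hA : A ≠ 0) : Tendsto (qhdNonlinearity a A) (𝓝[>] 0) atTop := by
  have hlin : Tendsto (fun P : ℝ => P - a) (𝓝[>] 0) (𝓝 (0 - a)) :=
    ((continuous_id.sub continuous_const).tendsto 0).mono_left nhdsWithin_le_nhds
  exact hlin.add_atTop ((tendsto_inv_nhdsGT_zero.const_mul_atTop (by positivity)).congr
    fun P => (div_eq_mul_inv _ _).symm)

end qhdNonlinearity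

/-- for the isothermal case `γ = 1`, with `f(P) = P − (As+B) + A²/P` having two
positive roots `P⁺ < P⁻`, the function `F₁'(P) = f(P) − 2(sμ/k)²P` satisfies
`F₁''(P) = f'(P) − 2(sμ/k)² < 0` on `(0, P⁺)`, tends to `+∞` as `P → 0⁺`, is negative at
`P⁺` (where it equals `−2(sμ/k)²P⁺`), and has exactly one zero in `(0, P⁺)`. -/
theorem stmt_12 (s μ k A B Pp Pm : ℝ) (hs : s ≠ 0) (hμ : 0 < μ) (hk : 0 < k) (hA : A ≠ 0)
    (hPp : 0 < Pp) (hPpPm : Pp < Pm)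
    (f : ℝ → ℝ) (hf : ∀ P : ℝ, f P = P - (A * s + B) + A ^ 2 / P)
    (hroot1 : f Pp = 0) (hroot2 : f Pm = 0)
    (G : ℝ → ℝ) (hG : ∀ P : ℝ, G P = f P - 2 * (s * μ / k) ^ 2 * P) :
    (∀ P : ℝ, 0 < P → P < Pp →
      deriv G P = deriv f P - 2 * (s * μ / k) ^ 2 ∧ deriv G P < 0) ∧
    Filter.Tendsto G (nhdsWithin 0 (Set.Ioi 0)) Filter.atTop ∧
    G Pp = -2 * (s * μ / k) ^ 2 * Pp ∧ G Pp < 0 ∧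
    (∃! P : ℝ, P ∈ Set.Ioo 0 Pp ∧ G P = 0) := by
  set c := 2 * (s * μ / k) ^ 2
  have hc : 0 < c := by positivity
  obtain rfl : f = qhdNonlinearity (A * s + B) A := funext hf
  have hGeq : G = fun P => qhdNonlinearity (A * s + B) A P - c * P := funext hG
  have hGderiv : ∀ P ≠ 0, HasDerivAt G (deriv (qhdNonlinearity (A * s + B) A) P - c) P :=
    fun P hP => hGeq ▸ (qhdNonlinearity.hasDerivAt hP).differentiableAt.hasDerivAt.sub
      ((hasDerivAt_id P).const_mul c |>.congr_deriv (mul_one c))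
  have hGderiv_neg : ∀ P, 0 < P → P < Pp → deriv G P < 0 := fun P hP hPPp => by
    rw [(hGderiv P hP.ne').deriv]
    linarith [qhdNonlinearity.deriv_neg_of_le_root hP hPPp.le hPpPm hroot1 hroot2]
  have hGPp : G Pp = -2 * (s * μ / k) ^ 2 * Pp := by rw [hG, hroot1]; ring
  have hGPp_neg : G Pp < 0 := by rw [hGPp]; nlinarith
  have hlim : Tendsto G (𝓝[>] 0) atTop := by
    have hlin : Tendsto (fun P : ℝ => -(c * P)) (𝓝[>] 0) (𝓝 (-(c * 0))) :=
      ((continuous_const.mul continuous_id).neg.tendsto 0).mono_left nhdsWithin_le_nhds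
    simpa only [hGeq, sub_eq_add_neg] using
      (qhdNonlinearity.tendsto_nhdsGT_zero hA).atTop_add hlin
  have hcont : ContinuousOn G (Ioc 0 Pp) := fun P hP =>
    (hGderiv P hP.1.ne').continuousAt.continuousWithinAt
  have hanti : StrictAntiOn G (Ioc 0 Pp) := strictAntiOn_of_deriv_neg (convex_Ioc 0 Pp) hcont
    fun P hP => by rw [interior_Ioc] at hP; exact hGderiv_neg P hP.1 hP.2
  refine ⟨fun P hP hPPp => ⟨?_, hGderiv_neg P hP hPPp⟩, hlim, hGPp, hGPp_neg,
    existsUnique_eq_zero_of_strictAntiOn_Ioc hPp hcont hanti hlim hGPp_neg⟩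
  exact (hGderiv P hP.ne').deriv
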